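/- arXiv:1712.02083 — 6 statements merged into one kernel-verified Lean document; each statement's English description precedes it below -/
import Mathlib

section
/- For the function g_z(h) = g(z + h, w) with g as the penalized expected phase retrieval objective, the gradient in the first block is Lipschitz: for all z, w with ‖w − x‖ ≤ (1/8)‖x‖ and all h ∈ ℝⁿ, ‖∇_z g(z + h, w) − ∇_z g(z, w)‖ ≤ (4‖x‖² + ρ)‖h‖. -/
/-!
For fixed `w` the `z`-gradient of `g` is affine in `z`: its increment along `h` is
`2⟪w, h⟫ w + (‖w‖² + ρ) h`, of norm at most `(3‖w‖² + ρ)‖h‖` by Cauchy–Schwarz. Near `x`,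
`‖w‖ ≤ (9/8)‖x‖`, and `3 (9/8)² = 243/64 ≤ 4`.
-/

open scoped RealInnerProductSpace

lemma three_mul_sq_norm_le_of_norm_sub_le {F : Type*} [SeminormedAddCommGroup F] {x w : F}
    (hw : ‖w - x‖ ≤ (1 / 8) * ‖x‖) : 3 * ‖w‖ ^ 2 ≤ 4 * ‖x‖ ^ 2 := by
  have hw_le : ‖w‖ ≤ (9 / 8) * ‖x‖ := by
    linarith [norm_le_norm_add_norm_sub' w x]
  nlinarith [norm_nonneg w]

variable {E : Type*} [NormedAddCommGroup E] [InnerProductSpace ℝ E]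

section Gradient

variable [CompleteSpace E] {f g : E → ℝ} {f' g' z : E}

namespace HasGradientAt

lemma add (hf : HasGradientAt f f' z) (hg : HasGradientAt g g' z) :
    HasGradientAt (fun y => f y + g y) (f' + g') z := by
  rw [hasGradientAt_iff_hasFDerivAt] at *
  simpa only [map_add] using hf.fun_add hg

lemma sub (hf : HasGradientAt f f' z) (hg : HasGradientAt g g' z) :
    HasGradientAt (fun y => f y - g y) (f' - g') z := by
  rw [hasGradientAt_iff_hasFDerivAt] at *
  simpa only [map_sub] using hf.fun_sub hg

lemma const_mul (c : ℝ) (hf : HasGradientAt f f' z) :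
    HasGradientAt (fun y => c * f y) (c • f') z := by
  rw [hasGradientAt_iff_hasFDerivAt] at *
  simpa only [map_smul] using hf.const_mul c

lemma mul (hf : HasGradientAt f f' z) (hg : HasGradientAt g g' z) :
    HasGradientAt (fun y => f y * g y) (f z • g' + g z • f') z := by
  rw [hasGradientAt_iff_hasFDerivAt] at *
  simpa only [map_add, map_smul] using hf.fun_mul hg

end HasGradientAt

lemma hasGradientAt_inner_right (a z : E) : HasGradientAt (fun y => ⟪a, y⟫) a z := by
  rw [hasGradientAt_iff_hasFDerivAt]
  exact (innerSL ℝ a).hasFDerivAt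

lemma hasGradientAt_norm_sub_sq (w z : E) :
    HasGradientAt (fun y => ‖y - w‖ ^ 2) ((2 : ℝ) • (z - w)) z := by
  rw [hasGradientAt_iff_hasFDerivAt]
  refine ((hasFDerivAt_id z).sub_const w).norm_sq.congr_fderiv ?_
  ext v
  simp

lemma hasGradientAt_norm_sq (z : E) : HasGradientAt (fun y => ‖y‖ ^ 2) ((2 : ℝ) • z) z := by
  simpa using hasGradientAt_norm_sub_sq 0 z

end Gradient

noncomputable def phaseObjective (x : E) (ρ : ℝ) (z w : E) : ℝ :=
  (3 / 2) * ‖x‖ ^ 4 + ⟪w, z⟫ ^ 2 + (1 / 2) * ‖z‖ ^ 2 * ‖w‖ ^ 2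
    - 2 * ⟪x, z⟫ * ⟪x, w⟫ - ‖x‖ ^ 2 * ⟪w, z⟫ + (ρ / 2) * ‖z - w‖ ^ 2

noncomputable def phaseGradient (x : E) (ρ : ℝ) (z w : E) : E :=
  (2 * ⟪w, z⟫) • w + ‖w‖ ^ 2 • z - (2 * ⟪x, w⟫) • x - ‖x‖ ^ 2 • w + ρ • (z - w)

lemma hasGradientAt_phaseObjective [CompleteSpace E] (x : E) (ρ : ℝ) (z w : E) :
    HasGradientAt (phaseObjective x ρ · w) (phaseGradient x ρ z w) z := by
  have hw := hasGradientAt_inner_right w z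
  have hx := hasGradientAt_inner_right x z
  have hc (c : ℝ) : HasGradientAt (fun _ : E => c) 0 z := hasGradientAt_const z c
  convert (((((hc ((3 / 2) * ‖x‖ ^ 4)).add (hw.mul hw)).add
    (((hasGradientAt_norm_sq z).const_mul (1 / 2)).mul (hc (‖w‖ ^ 2)))).sub
    ((hx.const_mul 2).mul (hc ⟪x, w⟫))).sub ((hc (‖x‖ ^ 2)).mul hw)).add
    ((hasGradientAt_norm_sub_sq w z).const_mul (ρ / 2)) using 1
  · ext y
    simp only [phaseObjective]
    ring
  · simp only [phaseGradient]
    module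

lemma phaseGradient_add_sub (x : E) (ρ : ℝ) (z w h : E) :
    phaseGradient x ρ (z + h) w - phaseGradient x ρ z w =
      (2 * ⟪w, h⟫) • w + (‖w‖ ^ 2 + ρ) • h := by
  simp only [phaseGradient, inner_add_right]
  module

lemma norm_phaseGradient_add_sub_le (x : E) {ρ : ℝ} (hρ : 0 ≤ ρ) (z w h : E) :
    ‖phaseGradient x ρ (z + h) w - phaseGradient x ρ z w‖ ≤ (3 * ‖w‖ ^ 2 + ρ) * ‖h‖ := by
  rw [phaseGradient_add_sub]
  calc ‖(2 * ⟪w, h⟫) • w + (‖w‖ ^ 2 + ρ) • h‖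
      ≤ ‖(2 * ⟪w, h⟫) • w‖ + ‖(‖w‖ ^ 2 + ρ) • h‖ := norm_add_le _ _
    _ = 2 * |⟪w, h⟫| * ‖w‖ + (‖w‖ ^ 2 + ρ) * ‖h‖ := by
      rw [norm_smul, norm_smul, Real.norm_eq_abs, Real.norm_eq_abs, abs_mul, abs_two,
        abs_of_nonneg (add_nonneg (sq_nonneg ‖w‖) hρ)]
    _ ≤ 2 * (‖w‖ * ‖h‖) * ‖w‖ + (‖w‖ ^ 2 + ρ) * ‖h‖ := by
      gcongr
      exact abs_real_inner_le_norm w h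
    _ = (3 * ‖w‖ ^ 2 + ρ) * ‖h‖ := by ring

theorem stmt_5 {n : ℕ} (x : EuclideanSpace ℝ (Fin n)) (ρ : ℝ) (hρ : 0 ≤ ρ)
    (g : EuclideanSpace ℝ (Fin n) → EuclideanSpace ℝ (Fin n) → ℝ)
    (hg : g = fun z w => (3 / 2) * ‖x‖ ^ 4 + ⟪w, z⟫ ^ 2 + (1 / 2) * ‖z‖ ^ 2 * ‖w‖ ^ 2
        - 2 * ⟪x, z⟫ * ⟪x, w⟫ - ‖x‖ ^ 2 * ⟪w, z⟫ + (ρ / 2) * ‖z - w‖ ^ 2)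
    (z w h : EuclideanSpace ℝ (Fin n)) (hw : ‖w - x‖ ≤ (1 / 8) * ‖x‖) :
    ‖gradient (fun z' => g z' w) (z + h) - gradient (fun z' => g z' w) z‖ ≤
      (4 * ‖x‖ ^ 2 + ρ) * ‖h‖ := by
  have hgrad : gradient (fun z' => g z' w) = (phaseGradient x ρ · w) := by
    subst hg
    exact funext fun u => (hasGradientAt_phaseObjective x ρ u w).gradient
  rw [hgrad]
  calc _ ≤ (3 * ‖w‖ ^ 2 + ρ) * ‖h‖ := norm_phaseGradient_add_sub_le x hρ z w h
    _ ≤ (4 * ‖x‖ ^ 2 + ρ) * ‖h‖ := by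
      gcongr (?_ + _) * _
      exact three_mul_sq_norm_le_of_norm_sub_le hw
end

section
/- Suppose ρ ≥ ‖x‖². Then for all (z, w) with ‖z − x‖ ≤ (1/8)‖x‖ and ‖w − x‖ ≤ (1/8)‖x‖, the Hessian of g satisfies ∇²g(z, w) ⪰ (1/3)‖x‖² I, i.e., for every (h_z, h_w), the Hessian quadratic form is at least (1/3)‖x‖²(‖h_z‖² + ‖h_w‖²). -/
open scoped RealInnerProductSpace

open scoped RealInnerProductSpace

set_option maxHeartbeats 1000000 in
private lemma key (r A B nz2 nw2 p q s t u v m c ρ : ℝ)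
    (hr : 0 ≤ r) (hA : 0 ≤ A) (hB : 0 ≤ B)
    (hnz : 49/64 * r^2 ≤ nz2) (hnw : 49/64 * r^2 ≤ nw2)
    (hp : |p| ≤ r*A) (hq : |q| ≤ r*B)
    (hs : |s| ≤ r*A/8) (ht : |t| ≤ r*B/8)
    (hu : |u| ≤ r^2/8) (hv : |v| ≤ r^2/8) (hm : |m| ≤ r^2/64)
    (hc : |c| ≤ A*B) (hρ : r^2 ≤ ρ) :
    (1/3)*r^2*(A^2+B^2) ≤
      2*(r^2+u+v+m)*c + (1/2)*nz2*B^2 + (1/2)*nw2*A^2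
        + 2*(p+s)*(q+t) - 2*p*q - r^2*c + (ρ/2)*(A^2+B^2-2*c) := by
  have habs : 0 ≤ A^2 + B^2 - 2*c := by
    nlinarith [sq_nonneg (A-B), (abs_le.mp hc).2]
  have hρ' : (r^2/2)*(A^2+B^2-2*c) ≤ (ρ/2)*(A^2+B^2-2*c) := by nlinarith
  have b1 : -(r^2/8*(A*B)) ≤ u*c := by
    have : |u*c| ≤ r^2/8*(A*B) := by
      rw [abs_mul]; exact mul_le_mul hu hc (abs_nonneg _) (by positivity)
    linarith [(abs_le.mp this).1]
  have b2 : -(r^2/8*(A*B)) ≤ v*c := by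
    have : |v*c| ≤ r^2/8*(A*B) := by
      rw [abs_mul]; exact mul_le_mul hv hc (abs_nonneg _) (by positivity)
    linarith [(abs_le.mp this).1]
  have b3 : -(r^2/64*(A*B)) ≤ m*c := by
    have : |m*c| ≤ r^2/64*(A*B) := by
      rw [abs_mul]; exact mul_le_mul hm hc (abs_nonneg _) (by positivity)
    linarith [(abs_le.mp this).1]
  have b4 : -((r*A)*(r*B/8)) ≤ p*t := by
    have : |p*t| ≤ (r*A)*(r*B/8) := by
      rw [abs_mul]; exact mul_le_mul hp ht (abs_nonneg _) (by positivity)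
    linarith [(abs_le.mp this).1]
  have b5 : -((r*A/8)*(r*B)) ≤ s*q := by
    have : |s*q| ≤ (r*A/8)*(r*B) := by
      rw [abs_mul]; exact mul_le_mul hs hq (abs_nonneg _) (by positivity)
    linarith [(abs_le.mp this).1]
  have b6 : -((r*A/8)*(r*B/8)) ≤ s*t := by
    have : |s*t| ≤ (r*A/8)*(r*B/8) := by
      rw [abs_mul]; exact mul_le_mul hs ht (abs_nonneg _) (by positivity)
    linarith [(abs_le.mp this).1]
  have hAB2 : r^2*(A*B) ≤ r^2*((A^2+B^2)/2) := by
    nlinarith [sq_nonneg (A-B), sq_nonneg r]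
  have hn1 : (49/64*r^2) * (B^2/2) ≤ nz2 * (B^2/2) :=
    mul_le_mul_of_nonneg_right hnz (by positivity)
  have hn2 : (49/64*r^2) * (A^2/2) ≤ nw2 * (A^2/2) :=
    mul_le_mul_of_nonneg_right hnw (by positivity)
  nlinarith [b1, b2, b3, b4, b5, b6, hAB2, hn1, hn2, hρ']

set_option maxHeartbeats 1000000 in
theorem stmt_8 {n : ℕ} (x : EuclideanSpace ℝ (Fin n)) (ρ : ℝ) (hρ : ‖x‖ ^ 2 ≤ ρ)
    (z w : EuclideanSpace ℝ (Fin n))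
    (hz : ‖z - x‖ ≤ (1 / 8) * ‖x‖) (hw : ‖w - x‖ ≤ (1 / 8) * ‖x‖)
    (hz' hw' : EuclideanSpace ℝ (Fin n)) :
    (1 / 3) * ‖x‖ ^ 2 * (‖hz'‖ ^ 2 + ‖hw'‖ ^ 2) ≤
      (⟪w, hz'⟫ + ⟪z, hw'⟫) ^ 2 + 2 * ⟪w, z⟫ * ⟪hw', hz'⟫
        + (1 / 2) * ‖z‖ ^ 2 * ‖hw'‖ ^ 2 + (1 / 2) * ‖w‖ ^ 2 * ‖hz'‖ ^ 2
        + 2 * ⟪z, hz'⟫ * ⟪w, hw'⟫ - 2 * ⟪x, hz'⟫ * ⟪x, hw'⟫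
        - ‖x‖ ^ 2 * ⟪hw', hz'⟫ + (ρ / 2) * ‖hz' - hw'‖ ^ 2 := by
  have hr : (0:ℝ) ≤ ‖x‖ := norm_nonneg x
  have hzn : 7/8 * ‖x‖ ≤ ‖z‖ := by
    have h := norm_sub_norm_le x z
    rw [show x - z = -(z - x) by abel, norm_neg] at h
    linarith
  have hwn : 7/8 * ‖x‖ ≤ ‖w‖ := by
    have h := norm_sub_norm_le x w
    rw [show x - w = -(w - x) by abel, norm_neg] at h
    linarith
  have hnz : 49/64 * ‖x‖^2 ≤ ‖z‖^2 := by nlinarith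
  have hnw : 49/64 * ‖x‖^2 ≤ ‖w‖^2 := by nlinarith
  have hp : |⟪x, hz'⟫| ≤ ‖x‖ * ‖hz'‖ := abs_real_inner_le_norm x hz'
  have hq : |⟪x, hw'⟫| ≤ ‖x‖ * ‖hw'‖ := abs_real_inner_le_norm x hw'
  have hs : |⟪z - x, hz'⟫| ≤ ‖x‖ * ‖hz'‖ / 8 := by
    calc |⟪z - x, hz'⟫| ≤ ‖z - x‖ * ‖hz'‖ := abs_real_inner_le_norm _ _
      _ ≤ (1/8 * ‖x‖) * ‖hz'‖ := mul_le_mul_of_nonneg_right hz (norm_nonneg _)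
      _ = ‖x‖ * ‖hz'‖ / 8 := by ring
  have ht : |⟪w - x, hw'⟫| ≤ ‖x‖ * ‖hw'‖ / 8 := by
    calc |⟪w - x, hw'⟫| ≤ ‖w - x‖ * ‖hw'‖ := abs_real_inner_le_norm _ _
      _ ≤ (1/8 * ‖x‖) * ‖hw'‖ := mul_le_mul_of_nonneg_right hw (norm_nonneg _)
      _ = ‖x‖ * ‖hw'‖ / 8 := by ring
  have hu : |⟪x, z - x⟫| ≤ ‖x‖^2 / 8 := by
    calc |⟪x, z - x⟫| ≤ ‖x‖ * ‖z - x‖ := abs_real_inner_le_norm _ _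
      _ ≤ ‖x‖ * (1/8 * ‖x‖) := mul_le_mul_of_nonneg_left hz hr
      _ = ‖x‖^2 / 8 := by ring
  have hv : |⟪x, w - x⟫| ≤ ‖x‖^2 / 8 := by
    calc |⟪x, w - x⟫| ≤ ‖x‖ * ‖w - x‖ := abs_real_inner_le_norm _ _
      _ ≤ ‖x‖ * (1/8 * ‖x‖) := mul_le_mul_of_nonneg_left hw hr
      _ = ‖x‖^2 / 8 := by ring
  have hm : |⟪w - x, z - x⟫| ≤ ‖x‖^2 / 64 := by
    calc |⟪w - x, z - x⟫| ≤ ‖w - x‖ * ‖z - x‖ := abs_real_inner_le_norm _ _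
      _ ≤ (1/8 * ‖x‖) * (1/8 * ‖x‖) := by
        apply mul_le_mul hw hz (norm_nonneg _) (by positivity)
      _ = ‖x‖^2 / 64 := by ring
  have hc : |⟪hz', hw'⟫| ≤ ‖hz'‖ * ‖hw'‖ := abs_real_inner_le_norm _ _
  have K := key ‖x‖ ‖hz'‖ ‖hw'‖ (‖z‖^2) (‖w‖^2) ⟪x, hz'⟫ ⟪x, hw'⟫
    ⟪z - x, hz'⟫ ⟪w - x, hw'⟫ ⟪x, z - x⟫ ⟪x, w - x⟫ ⟪w - x, z - x⟫ ⟪hz', hw'⟫ ρ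
    hr (norm_nonneg _) (norm_nonneg _) hnz hnw hp hq hs ht hu hv hm hc hρ
  have e1 : ⟪w, z⟫ = ‖x‖^2 + ⟪x, z - x⟫ + ⟪x, w - x⟫ + ⟪w - x, z - x⟫ := by
    simp only [inner_sub_left, inner_sub_right, real_inner_self_eq_norm_sq]
    rw [real_inner_comm w x]
    ring
  have e2 : ⟪z, hz'⟫ = ⟪x, hz'⟫ + ⟪z - x, hz'⟫ := by
    simp only [inner_sub_left]; ring
  have e3 : ⟪w, hw'⟫ = ⟪x, hw'⟫ + ⟪w - x, hw'⟫ := by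
    simp only [inner_sub_left]; ring
  have e4 : ⟪hw', hz'⟫ = ⟪hz', hw'⟫ := real_inner_comm _ _
  have e5 : ‖hz' - hw'‖^2 = ‖hz'‖^2 + ‖hw'‖^2 - 2 * ⟪hz', hw'⟫ := by
    rw [@norm_sub_sq_real]; ring
  have hsq : 0 ≤ (⟪w, hz'⟫ + ⟪z, hw'⟫) ^ 2 := sq_nonneg _
  rw [e1, e2, e3, e4, e5]
  nlinarith [K, hsq]
end

section
/- Fix x, w ∈ ℝⁿ with w ≠ 0, ρ > 0, and let z⁺ = (2wwᵀ + (‖w‖² + ρ)I)⁻¹ (2(xᵀw)x + ‖x‖²w + ρw). Then z⁺ = (3‖w‖² + ρ)⁻¹(‖x‖² + ρ)w + 2(3‖w‖² + ρ)⁻¹ ((wᵀx)²/‖w‖²) w + 2(‖w‖² + ρ)⁻¹ (xᵀw)(x − (wᵀx/‖w‖²)w). -/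
open scoped RealInnerProductSpace

theorem stmt_13 {n : ℕ} (x w : EuclideanSpace ℝ (Fin n)) (hw : w ≠ 0)
    (ρ : ℝ) (hρ : 0 < ρ) (zplus : EuclideanSpace ℝ (Fin n))
    (hz : (2 * ⟪w, zplus⟫) • w + (‖w‖ ^ 2 + ρ) • zplus =
      (2 * ⟪x, w⟫) • x + ‖x‖ ^ 2 • w + ρ • w) :
    zplus = ((3 * ‖w‖ ^ 2 + ρ)⁻¹ * (‖x‖ ^ 2 + ρ)) • w
      + (2 * (3 * ‖w‖ ^ 2 + ρ)⁻¹ * (⟪w, x⟫ ^ 2 / ‖w‖ ^ 2)) • w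
      + (2 * (‖w‖ ^ 2 + ρ)⁻¹ * ⟪x, w⟫) • (x - (⟪w, x⟫ / ‖w‖ ^ 2) • w) := by
  have hW : (0:ℝ) < ‖w‖ ^ 2 := pow_pos (norm_pos_iff.mpr hw) 2
  have hW1 : (0:ℝ) < ‖w‖ ^ 2 + ρ := by positivity
  have hW3 : (0:ℝ) < 3 * ‖w‖ ^ 2 + ρ := by positivity
  set t : EuclideanSpace ℝ (Fin n) :=
    ((3 * ‖w‖ ^ 2 + ρ)⁻¹ * (‖x‖ ^ 2 + ρ)) • w
      + (2 * (3 * ‖w‖ ^ 2 + ρ)⁻¹ * (⟪w, x⟫ ^ 2 / ‖w‖ ^ 2)) • w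
      + (2 * (‖w‖ ^ 2 + ρ)⁻¹ * ⟪x, w⟫) • (x - (⟪w, x⟫ / ‖w‖ ^ 2) • w) with ht_def
  have hxw : ⟪x, w⟫ = ⟪w, x⟫ := real_inner_comm w x
  have ht : (2 * ⟪w, t⟫) • w + (‖w‖ ^ 2 + ρ) • t =
      (2 * ⟪x, w⟫) • x + ‖x‖ ^ 2 • w + ρ • w := by
    rw [ht_def]
    simp only [inner_add_right, inner_sub_right, inner_smul_right,
      real_inner_self_eq_norm_sq, hxw]
    match_scalars
    · field_simp
      ring
    · field_simp
  -- uniqueness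
  have hsub : (2 * ⟪w, zplus - t⟫) • w + (‖w‖ ^ 2 + ρ) • (zplus - t) = 0 := by
    have h := hz.trans ht.symm
    simp only [inner_sub_right]
    linear_combination (norm := module) h
  have hinner : ⟪w, zplus - t⟫ = 0 := by
    have h0 : ⟪w, (2 * ⟪w, zplus - t⟫) • w + (‖w‖ ^ 2 + ρ) • (zplus - t)⟫ = 0 := by
      rw [hsub]; simp
    simp only [inner_add_right, inner_smul_right, real_inner_self_eq_norm_sq] at h0
    nlinarith [h0, hW]
  have : (‖w‖ ^ 2 + ρ) • (zplus - t) = 0 := by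
    have := hsub
    rw [hinner] at this
    simpa using this
  have hzt : zplus - t = 0 := by
    rcases smul_eq_zero.mp this with h | h
    · exact absurd h (ne_of_gt hW1)
    · exact h
  have := sub_eq_zero.mp hzt
  rw [this]
end

section
/- Suppose ρ ≥ (27/8)‖x‖² and x ≠ 0. If w ∈ ℝⁿ satisfies ‖w − x‖ ≤ (1/8)‖x‖, and z⁺ = (2wwᵀ + (‖w‖² + ρ)I)⁻¹ (2(xᵀw)x + (‖x‖² + ρ)w), then ‖z⁺ − x‖ ≤ (1/8)‖x‖. -/
/-!
Write `e = z⁺ - x` and `d = w - x`. Subtracting the system evaluated at `x` shows that `e` solves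
`(‖w‖² + ρ) e + 2⟪w, e⟫ w = (ρ - ‖x‖² + ‖d‖²) d + (‖x‖² - ‖w‖²) w`.
Pairing with `e` and absorbing the cross term `(‖x‖² - ‖w‖²)⟪w, e⟫` into `2⟪w, e⟫²` gives the energy
bound `(‖w‖² + ρ)‖e‖² ≤ (ρ - ‖x‖² + ‖d‖²)‖d‖‖e‖ + (‖x‖² - ‖w‖²)²/8`. If `‖e‖` exceeded `‖x‖/8 ≥ ‖d‖`,
the first term would be at most `(ρ - ‖x‖² + ‖d‖²)‖e‖²`, leaving
`(7/4)‖x‖² · ‖x‖²/64 < (‖w‖² + ‖x‖² - ‖d‖²)‖e‖² ≤ (‖x‖² - ‖w‖²)²/8 ≤ (17/64)²‖x‖⁴/8`, which is false.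
-/

open scoped RealInnerProductSpace

section InnerProductSpace

variable {E : Type*} [NormedAddCommGroup E] [InnerProductSpace ℝ E]

theorem rankOneUpdate_sub_eq {x w z : E} {ρ : ℝ}
    (hz : (2 * ⟪w, z⟫) • w + (‖w‖ ^ 2 + ρ) • z = (2 * ⟪x, w⟫) • x + (‖x‖ ^ 2 + ρ) • w) :
    (‖w‖ ^ 2 + ρ) • (z - x) + (2 * ⟪w, z - x⟫) • w =
      (ρ - ‖x‖ ^ 2 + ‖w - x‖ ^ 2) • (w - x) + (‖x‖ ^ 2 - ‖w‖ ^ 2) • w := by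
  rw [inner_sub_right, norm_sub_sq_real, real_inner_comm x w] at *
  linear_combination (norm := module) hz

theorem sq_norm_le_of_rankOneUpdate_eq {e d w : E} {a b c : ℝ} (ha : 0 ≤ a)
    (h : c • e + (2 * ⟪w, e⟫) • w = a • d + b • w) :
    c * ‖e‖ ^ 2 ≤ a * ‖d‖ * ‖e‖ + b ^ 2 / 8 := by
  have hpair := congrArg (⟪·, e⟫) h
  simp only [inner_add_left, real_inner_smul_left, real_inner_self_eq_norm_sq] at hpair
  have hcs : a * ⟪d, e⟫ ≤ a * (‖d‖ * ‖e‖) := mul_le_mul_of_nonneg_left (real_inner_le_norm d e) ha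
  linarith [sq_nonneg (⟪w, e⟫ - b / 4)]

end InnerProductSpace

theorem le_of_energy_bound {s t r u ρ : ℝ} (hs : 0 < s) (ht : t ≤ 1 / 8 * s) (hr : |r - s| ≤ t)
    (hA : 0 ≤ ρ - s ^ 2 + t ^ 2)
    (h : (r ^ 2 + ρ) * u ^ 2 ≤ (ρ - s ^ 2 + t ^ 2) * t * u + (s ^ 2 - r ^ 2) ^ 2 / 8) :
    u ≤ 1 / 8 * s := by
  by_contra! hu
  obtain ⟨hr₁, hr₂⟩ := abs_le.mp hr
  have hcross : (ρ - s ^ 2 + t ^ 2) * t * u ≤ (ρ - s ^ 2 + t ^ 2) * u ^ 2 := by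
    have := mul_nonneg hA (mul_nonneg (by linarith : 0 ≤ u - t) (by linarith : 0 ≤ u))
    linear_combination this
  have hdiff : |s ^ 2 - r ^ 2| ≤ 17 / 64 * s ^ 2 := by
    rw [sq_sub_sq, abs_mul, abs_of_nonneg (by linarith : 0 ≤ s + r), abs_sub_comm]
    calc (s + r) * |r - s| ≤ (17 / 8 * s) * (1 / 8 * s) := by gcongr <;> linarith
      _ = 17 / 64 * s ^ 2 := by ring
  have hcoeff : 7 / 4 * s ^ 2 ≤ r ^ 2 + s ^ 2 - t ^ 2 := by nlinarith [abs_nonneg (r - s)]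
  have hchain : 7 / 4 * s ^ 2 * (1 / 8 * s) ^ 2 < (17 / 64 * s ^ 2) ^ 2 / 8 :=
    calc 7 / 4 * s ^ 2 * (1 / 8 * s) ^ 2 < 7 / 4 * s ^ 2 * u ^ 2 := by gcongr
      _ ≤ (r ^ 2 + s ^ 2 - t ^ 2) * u ^ 2 := by gcongr
      _ ≤ (s ^ 2 - r ^ 2) ^ 2 / 8 := by linarith
      _ ≤ (17 / 64 * s ^ 2) ^ 2 / 8 := by rw [← sq_abs]; gcongr
  linarith [pow_pos hs 4]

theorem stmt_15 {n : ℕ} (x w : EuclideanSpace ℝ (Fin n)) (hx : x ≠ 0)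
    (ρ : ℝ) (hρ : (27 / 8) * ‖x‖ ^ 2 ≤ ρ)
    (hw : ‖w - x‖ ≤ (1 / 8) * ‖x‖) (zplus : EuclideanSpace ℝ (Fin n))
    (hz : (2 * ⟪w, zplus⟫) • w + (‖w‖ ^ 2 + ρ) • zplus =
      (2 * ⟪x, w⟫) • x + (‖x‖ ^ 2 + ρ) • w) :
    ‖zplus - x‖ ≤ (1 / 8) * ‖x‖ := by
  have hA : 0 ≤ ρ - ‖x‖ ^ 2 + ‖w - x‖ ^ 2 := by linarith [sq_nonneg ‖x‖, sq_nonneg ‖w - x‖]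
  exact le_of_energy_bound (norm_pos_iff.mpr hx) hw (abs_norm_sub_norm_le w x) hA
    (sq_norm_le_of_rankOneUpdate_eq hA (rankOneUpdate_sub_eq hz))
end

section
/- For 7/8 ≤ β ≤ 9/8 and β/2 + 63/(128β) ≤ α ≤ 1 with (α, β) ≠ (1, 1), one has −3(α − β)²(α + β) + (α² − 1)(3α − β) < 0. -/
theorem stmt_16 (α β : ℝ) (hβ1 : 7 / 8 ≤ β) (hβ2 : β ≤ 9 / 8)
    (hα1 : β / 2 + 63 / (128 * β) ≤ α) (hα2 : α ≤ 1) (hne : (α, β) ≠ (1, 1)) :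
    -3 * (α - β) ^ 2 * (α + β) + (α ^ 2 - 1) * (3 * α - β) < 0 := by
  have hβ0 : (0:ℝ) < β := by linarith
  have hpos : (0:ℝ) < 63 / (128 * β) := by positivity
  have hα0 : (0:ℝ) < α := by linarith
  rcases eq_or_ne α β with h | h
  · have hα1' : α ≠ 1 := by
      intro hh
      exact hne (by simp [hh, h ▸ hh])
    have : α < 1 := lt_of_le_of_ne hα2 hα1'
    subst h
    nlinarith
  · have h1 : -3 * (α - β) ^ 2 * (α + β) < 0 := by
      have hd : α - β ≠ 0 := sub_ne_zero.2 h
      have : (0:ℝ) < (α - β)^2 := by positivity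
      nlinarith
    nlinarith [sq_nonneg (α - β), mul_nonneg (sub_nonneg.2 hα2) hα0.le]
end

section
/- For 7/8 ≤ β ≤ 9/8 and β/2 + 63/(128β) ≤ α ≤ 1 with (α, β) ≠ (1, 1), the ratio R(α, β) = (9αβ⁴ − 9αβ² + β + 8α²β − 3β³ − 6α²β³) / (3(α − β)²(α + β) − (α² − 1)(3α − β)) satisfies R(α, β) ≤ 3β ≤ 27/8. -/
theorem stmt_17 (α β : ℝ) (hβ1 : 7 / 8 ≤ β) (hβ2 : β ≤ 9 / 8)
    (hα1 : β / 2 + 63 / (128 * β) ≤ α) (hα2 : α ≤ 1) (hne : (α, β) ≠ (1, 1)) :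
    (9 * α * β ^ 4 - 9 * α * β ^ 2 + β + 8 * α ^ 2 * β - 3 * β ^ 3 - 6 * α ^ 2 * β ^ 3)
        / (3 * (α - β) ^ 2 * (α + β) - (α ^ 2 - 1) * (3 * α - β)) ≤ 3 * β ∧
      3 * β ≤ 27 / 8 := by
  have hb0 : (0:ℝ) < β := by linarith
  have hα1' : 128 * β * α ≥ 64 * β ^ 2 + 63 := by
    have h : 128 * β * (β / 2 + 63 / (128 * β)) = 64 * β ^ 2 + 63 := by
      field_simp; ring
    nlinarith [mul_le_mul_of_nonneg_left hα1 (by positivity : (0:ℝ) ≤ 128 * β)]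
  have hD : 0 < 3 * (α - β) ^ 2 * (α + β) - (α ^ 2 - 1) * (3 * α - β) := by
    by_cases hb : β = 1
    · subst hb
      have ha : α ≠ 1 := fun h => hne (by simp [h])
      have ha' : α < 1 := lt_of_le_of_ne hα2 ha
      nlinarith [sq_nonneg (1 - α), sq_nonneg α]
    · have hβne : β - 1 ≠ 0 := sub_ne_zero.2 hb
      have hb' : (β - 1) ^ 2 > 0 := by positivity
      nlinarith [mul_nonneg (sub_nonneg.2 hα2) (by nlinarith : (0:ℝ) ≤ 2 * β * (α + 1) + 3 * β ^ 2 - 3),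
        mul_pos hb' (by linarith : (0:ℝ) < 1 + β)]
  constructor
  · rw [div_le_iff₀ hD]
    nlinarith [mul_nonneg (sub_nonneg.2 hα2)
      (by nlinarith : (0:ℝ) ≤ β * ((-1 - 3*β + 3*β^2 + 9*β^3) + α * (8 + 6*β - 6*β^2)))]
  · linarith
end
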